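/- For every integer k ≥ 3, the prism P_k = C_k × K_2 has Frank number 2. -/

import Mathlib

/-!
Lower bound: if every edge at a vertex `v` is deletable in one orientation, then `v` has two
out-neighbours (otherwise deleting its only out-arc cuts `v` off) and two in-neighbours, so `v`
has degree at least four, whereas the prism is cubic.

Upper bound, writing `(i,f)` and `(i,t)` for the bottom and top copies `(i, false)`, `(i, true)` of
`i`: the first orientation runs the bottom cycle forwards, the top cycle backwards and spoke `i`
upwards iff `i.val` is even. Deleting the bottom or top edge at an even position `i < k - 1` leaves
a Hamiltonian cycle, as spoke `i` points up and spoke `i + 1` down; deleting spoke `0` or `k - 1`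
leaves both cycles and a spoke in each direction. The second orientation is the Hamiltonian cycle
`(0,f) → (0,t) → (1,t) → ⋯ → (k-1,t) → (k-1,f) → ⋯ → (1,f) → (0,f)` together with the two chords at
position `k - 1` and the spokes `1, …, k - 2` directed by the same parity rule, so every chord is
deletable in it. Deleting a cycle edge at an odd position `i` splits that layer into the paths on
`[0, i]` and `[i + 1, k - 1]`, which are reattached by the down spoke at `i` and the up spoke at
`i + 1` (or, when `i + 1 = k - 1`, by the chord).
-/

namespace Frank

variable {V : Type*}

/-- An orientation of a simple graph `G`: each edge gets exactly one direction. -/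
structure Orient (G : SimpleGraph V) where
  dir : V → V → Prop
  dir_iff : ∀ u v, (dir u v ∨ dir v u) ↔ G.Adj u v
  not_both : ∀ u v, dir u v → ¬ dir v u

/-- A relation (digraph) is strongly connected. -/
def IsStrong (r : V → V → Prop) : Prop :=
  ∀ x y : V, Relation.ReflTransGen r x y

/-- Delete the single arc `(u,v)` from the digraph `r`. -/
def delArc (r : V → V → Prop) (u v : V) : V → V → Prop :=
  fun a b => r a b ∧ ¬(a = u ∧ b = v)

/-- Delete (both possible arcs of) the edge `uv` from the digraph `r`. -/
def delEdge (r : V → V → Prop) (u v : V) : V → V → Prop :=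
  fun a b => r a b ∧ ¬((a = u ∧ b = v) ∨ (a = v ∧ b = u))

/-- The edge `uv` is deletable in the orientation `O`: after removing its arc the
orientation stays strongly connected. -/
def EdgeDeletable {G : SimpleGraph V} (O : Orient G) (u v : V) : Prop :=
  IsStrong (delEdge O.dir u v)

/-- The Frank number of `G`: the least `k` admitting `k` strongly connected orientations
such that every edge is deletable in at least one of them. -/
noncomputable def frankNumber (G : SimpleGraph V) : ℕ :=
  sInf {k | ∃ Os : Fin k → Orient G, (∀ i, IsStrong (Os i).dir) ∧
    ∀ u v, G.Adj u v → ∃ i, EdgeDeletable (Os i) u v}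

/-- `G` is 2-edge-connected: connected and stays connected after deleting any single edge. -/
def TwoEdgeConn (G : SimpleGraph V) : Prop :=
  G.Connected ∧ ∀ e : Sym2 V, (G.deleteEdges {e}).Connected

/-- `G` is 3-edge-connected: connected and stays connected after deleting any two edges. -/
def ThreeEdgeConn (G : SimpleGraph V) : Prop :=
  G.Connected ∧ ∀ e f : Sym2 V, (G.deleteEdges {e, f}).Connected

/-- The prism `C_k × K_2`: two `k`-cycles joined by spokes. -/
def prism (k : ℕ) : SimpleGraph (ZMod k × Bool) :=
  SimpleGraph.fromRel (fun a b =>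
    (a.2 = b.2 ∧ b.1 = a.1 + 1) ∨ (a.1 = b.1 ∧ a.2 ≠ b.2))

open Relation

section ZMod
variable {k : ℕ}

theorem natCast_ne_zero_of_pos_of_lt {n : ℕ} (h0 : 0 < n) (hn : n < k) : (n : ZMod k) ≠ 0 := by
  rw [Ne, ZMod.natCast_eq_zero_iff]
  exact fun h => absurd (Nat.le_of_dvd h0 h) (by omega)

theorem natCast_sub_one_self (hk : 1 ≤ k) : ((k - 1 : ℕ) : ZMod k) = -1 := by
  rw [Nat.cast_sub hk, ZMod.natCast_self, Nat.cast_one, zero_sub]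

theorem val_neg_one_of_one_le (hk : 1 ≤ k) : (-1 : ZMod k).val = k - 1 := by
  rw [← natCast_sub_one_self hk, ZMod.val_natCast_of_lt (by omega)]

theorem natCast_ne_of_ne_val {n : ℕ} {x : ZMod k} (hn : n < k) (h : n ≠ x.val) :
    (n : ZMod k) ≠ x :=
  fun hx => h (by rw [← hx, ZMod.val_natCast_of_lt hn])

theorem val_add_one_of_ne_neg_one [NeZero k] {x : ZMod k} (hx : x ≠ -1) :
    (x + 1).val = x.val + 1 := by
  have hlt : x.val + 1 < k := by
    have := ZMod.val_lt x
    have : x.val ≠ k - 1 := fun h =>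
      hx (by rw [← ZMod.natCast_zmod_val x, h, natCast_sub_one_self NeZero.one_le])
    omega
  rw [← ZMod.val_natCast_of_lt hlt, Nat.cast_succ, ZMod.natCast_zmod_val]

theorem one_ne_zero_of_three_le (hk : 3 ≤ k) : (1 : ZMod k) ≠ 0 := by
  simpa using natCast_ne_zero_of_pos_of_lt (k := k) one_pos (by omega)

theorem two_ne_zero_of_three_le (hk : 3 ≤ k) : (2 : ZMod k) ≠ 0 := by
  simpa using natCast_ne_zero_of_pos_of_lt (k := k) two_pos (by omega)

theorem zero_ne_neg_one_of_three_le (hk : 3 ≤ k) : (0 : ZMod k) ≠ -1 := by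
  simpa [eq_comm] using one_ne_zero_of_three_le hk

end ZMod

section Digraph
variable {r : V → V → Prop}

theorem isStrong_of_hub (c : V) (h : ∀ x, ReflTransGen r x c ∧ ReflTransGen r c x) :
    IsStrong r :=
  fun x y => (h x).1.trans (h y).2

theorem IsStrong.mono {r' : V → V → Prop} (hr : IsStrong r) (h : ∀ x y, r x y → r' x y) :
    IsStrong r' :=
  fun x y => ReflTransGen.mono h x y (hr x y)

theorem IsStrong.of_antihom {W : Type*} {r' : W → W → Prop} (hr' : IsStrong r') (τ : W → V)
    (hτ : Function.Surjective τ) (h : ∀ a c, r' a c → r (τ c) (τ a)) : IsStrong r := by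
  intro x y
  obtain ⟨x, rfl⟩ := hτ x
  obtain ⟨y, rfl⟩ := hτ y
  exact reflTransGen_swap.mp (ReflTransGen.lift τ (fun a c hac => h a c hac) y x (hr' y x))

theorem reflTransGen_of_forall_lt (F : ℕ → V) {a b : ℕ} (hab : a ≤ b)
    (h : ∀ n, a ≤ n → n < b → r (F n) (F (n + 1))) : ReflTransGen r (F a) (F b) :=
  ReflTransGen.lift F (fun _ _ => id) a b <|
    reflTransGen_of_succ_of_le _ (fun n hn => by simpa using h n hn.1 hn.2) hab

theorem reflTransGen_zmod_of_forall_ne {k : ℕ} [NeZero k] (f : ZMod k → V) {g : ZMod k}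
    (h : ∀ m, m ≠ g → r (f m) (f (m + 1))) (j : ZMod k) :
    ReflTransGen r (f (g + 1)) (f j) ∧ ReflTransGen r (f j) (f g) := by
  let F : ℕ → V := fun n => f (g + 1 + n)
  have hF : ∀ n, n < k - 1 → r (F n) (F (n + 1)) := by
    intro n hn
    have hne : g + 1 + n ≠ g := fun he =>
      natCast_ne_zero_of_pos_of_lt (k := k) (n := n + 1) (by omega) (by omega)
        (by push_cast; linear_combination he)
    simpa [F, add_assoc] using h _ hne
  have hj : F (j - (g + 1)).val = f j := by simp [F]
  have hg : F (k - 1) = f g := by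
    simp only [F, Nat.cast_sub (NeZero.one_le : 1 ≤ k), ZMod.natCast_self, Nat.cast_one]
    ring_nf
  have hlt : (j - (g + 1)).val < k := ZMod.val_lt _
  constructor
  · have h := reflTransGen_of_forall_lt F (Nat.zero_le (j - (g + 1)).val)
      fun n _ hn => hF n (by omega)
    rwa [hj, show F 0 = f (g + 1) by simp [F]] at h
  · rw [← hj, ← hg]
    exact reflTransGen_of_forall_lt F (by omega) fun n _ hn => hF n hn

theorem isStrong_of_layers {α : Type*} {r : α × Bool → α × Bool → Prop} {s₀ t₀ s₁ t₁ : α}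
    (h₀ : ∀ x, ReflTransGen r (s₀, false) (x, false) ∧ ReflTransGen r (x, false) (t₀, false))
    (h₁ : ∀ x, ReflTransGen r (s₁, true) (x, true) ∧ ReflTransGen r (x, true) (t₁, true))
    (hup : r (t₀, false) (s₁, true)) (hdown : r (t₁, true) (s₀, false)) : IsStrong r := by
  have top_to_hub x : ReflTransGen r (x, true) (s₀, false) := (h₁ x).2.tail hdown
  refine isStrong_of_hub (s₀, false) fun ⟨x, b⟩ => ?_
  cases b
  · exact ⟨((h₀ x).2.tail hup).trans (top_to_hub s₁), (h₀ x).1⟩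
  · exact ⟨top_to_hub x, ((h₀ t₀).1.tail hup).trans (h₁ x).1⟩

theorem not_isStrong_delEdge_of_forall_out {v w x : V} (hw : ∀ y, r v y → y = w) (hx : x ≠ v) :
    ¬ IsStrong (delEdge r v w) := fun h => by
  rcases (h v x).cases_head with hvx | ⟨y, hy, -⟩
  · exact hx hvx.symm
  · exact hy.2 (Or.inl ⟨rfl, hw y hy.1⟩)

theorem not_isStrong_delEdge_of_forall_in {v w x : V} (hw : ∀ y, r y v → y = w) (hx : x ≠ v) :
    ¬ IsStrong (delEdge r v w) := fun h => by
  rcases (h x v).cases_tail with hvx | ⟨y, -, hy⟩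
  · exact hx hvx.symm
  · exact hy.2 (Or.inr ⟨hw y hy.1, rfl⟩)

end Digraph

section FrankNumber
variable {G : SimpleGraph V}

theorem delEdge_comm (r : V → V → Prop) (u v : V) : delEdge r u v = delEdge r v u := by
  funext a b
  simp only [delEdge, or_comm]

theorem edgeDeletable_comm {O : Orient G} {u v : V} :
    EdgeDeletable O u v ↔ EdgeDeletable O v u := by
  rw [EdgeDeletable, EdgeDeletable, delEdge_comm]

theorem not_forall_edgeDeletable_of_three_neighbors (O : Orient G) {v a b c : V}
    (hv : ∀ w, G.Adj v w → w = a ∨ w = b ∨ w = c) (ha : G.Adj v a) :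
    ¬ ∀ w, G.Adj v w → EdgeDeletable O v w := by
  intro hdel
  have hav : a ≠ v := ha.ne.symm
  have out w (hw : G.Adj v w) : ∃ x, O.dir v x ∧ x ≠ w := by
    by_contra! h
    exact not_isStrong_delEdge_of_forall_out h hav (hdel w hw)
  have into w (hw : G.Adj v w) : ∃ x, O.dir x v ∧ x ≠ w := by
    by_contra! h
    exact not_isStrong_delEdge_of_forall_in h hav (hdel w hw)
  have adj_out {x} (hx : O.dir v x) : G.Adj v x := (O.dir_iff v x).mp (Or.inl hx)
  have adj_in {x} (hx : O.dir x v) : G.Adj v x := (O.dir_iff v x).mp (Or.inr hx)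
  have ne {x y} (hx : O.dir v x) (hy : O.dir y v) : x ≠ y := by
    rintro rfl; exact O.not_both _ _ hx hy
  obtain ⟨x, hx, -⟩ := out a ha
  obtain ⟨x', hx', hxx'⟩ := out x (adj_out hx)
  obtain ⟨y, hy, -⟩ := into a ha
  obtain ⟨y', hy', hyy'⟩ := into y (adj_in hy)
  -- two out-neighbours `x ≠ x'` and two in-neighbours `y ≠ y'`: four vertices among `a, b, c`
  have hnodup : [x, x', y, y'].Nodup := by
    simp [hyy'.symm, ne hx hy, ne hx hy', ne hx' hy, ne hx' hy', Ne.symm hxx']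
  have hsub : [x, x', y, y'] ⊆ [a, b, c] := by
    simp only [List.cons_subset, List.mem_cons, List.not_mem_nil, or_false, List.nil_subset,
      and_true]
    exact ⟨hv _ (adj_out hx), hv _ (adj_out hx'), hv _ (adj_in hy), hv _ (adj_in hy')⟩
  simpa using (hnodup.subperm hsub).length_le

def IsFrankCover {ι : Type*} (G : SimpleGraph V) (Os : ι → Orient G) : Prop :=
  (∀ i, IsStrong (Os i).dir) ∧ ∀ u v, G.Adj u v → ∃ i, EdgeDeletable (Os i) u v

theorem frankNumber_eq_two {Os : Fin 2 → Orient G} (hOs : IsFrankCover G Os)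
    (hG : ∀ O : Orient G, ¬ ∀ u v, G.Adj u v → EdgeDeletable O u v) :
    frankNumber G = 2 := by
  have h2 : 2 ∈ {n | ∃ Os : Fin n → Orient G, IsFrankCover G Os} := ⟨Os, hOs⟩
  refine le_antisymm (Nat.sInf_le h2) (le_csInf ⟨2, h2⟩ fun n ⟨Os', hstrong, hcover⟩ => ?_)
  by_contra! hn
  interval_cases n
  · exact hG (Os 0) fun u v huv => (hcover u v huv).elim fun i _ => i.elim0
  · refine hG (Os' 0) fun u v huv => ?_
    obtain ⟨i, hi⟩ := hcover u v huv
    rwa [Subsingleton.elim i 0] at hi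

end FrankNumber

section Prism
variable {k : ℕ}

theorem prism_adj_succ (hk : 3 ≤ k) (i : ZMod k) (b : Bool) : (prism k).Adj (i, b) (i + 1, b) := by
  rw [prism, SimpleGraph.fromRel_adj]
  refine ⟨fun h => one_ne_zero_of_three_le hk ?_, Or.inl (Or.inl ⟨rfl, rfl⟩)⟩
  simpa using (Prod.ext_iff.mp h).1.symm

theorem eq_or_eq_or_eq_of_prism_adj {i : ZMod k} {b : Bool} {w : ZMod k × Bool}
    (h : (prism k).Adj (i, b) w) : w = (i + 1, b) ∨ w = (i - 1, b) ∨ w = (i, !b) := by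
  obtain ⟨j, c⟩ := w
  rw [prism, SimpleGraph.fromRel_adj] at h
  obtain ⟨-, (⟨rfl, rfl⟩ | ⟨rfl, hc⟩) | (⟨rfl, rfl⟩ | ⟨rfl, hc⟩)⟩ := h
  · exact Or.inl rfl
  · cases b <;> cases c <;> simp_all
  · exact Or.inr (Or.inl (by simp))
  · cases b <;> cases c <;> simp_all

/-- `cyc (i, b)` orients the edge from `(i, b)` to `(i + 1, b)`: `some true` forwards,
`some false` backwards, `none` deleted; `spk i = some b` directs the spoke at `i` into layer `b`. -/
def prismArcs (cyc : ZMod k × Bool → Option Bool) (spk : ZMod k → Option Bool)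
    (x y : ZMod k × Bool) : Prop :=
  (x.2 = y.2 ∧ ((y.1 = x.1 + 1 ∧ cyc x = some true) ∨ (x.1 = y.1 + 1 ∧ cyc y = some false))) ∨
    (x.1 = y.1 ∧ x.2 ≠ y.2 ∧ spk x.1 = some y.2)

variable {cyc : ZMod k × Bool → Option Bool} {spk : ZMod k → Option Bool}

theorem prismArcs_succ {i : ZMod k} {b : Bool} (h : cyc (i, b) = some true) :
    prismArcs cyc spk (i, b) (i + 1, b) :=
  Or.inl ⟨rfl, Or.inl ⟨rfl, h⟩⟩

theorem prismArcs_pred {i : ZMod k} {b : Bool} (h : cyc (i, b) = some false) :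
    prismArcs cyc spk (i + 1, b) (i, b) :=
  Or.inl ⟨rfl, Or.inr ⟨rfl, h⟩⟩

theorem prismArcs_spoke {i : ZMod k} {b : Bool} (h : spk i = some b) :
    prismArcs cyc spk (i, !b) (i, b) :=
  Or.inr ⟨rfl, by simp, h⟩

theorem reflTransGen_prismArcs_of_forall_ne_true [NeZero k] {g : ZMod k} {b : Bool}
    (h : ∀ m, m ≠ g → cyc (m, b) = some true) (j : ZMod k) :
    ReflTransGen (prismArcs cyc spk) (g + 1, b) (j, b) ∧
      ReflTransGen (prismArcs cyc spk) (j, b) (g, b) :=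
  reflTransGen_zmod_of_forall_ne (fun m => (m, b)) (fun m hm => prismArcs_succ (h m hm)) j

theorem reflTransGen_prismArcs_of_forall_ne_false [NeZero k] {g : ZMod k} {b : Bool}
    (h : ∀ m, m ≠ g → cyc (m, b) = some false) (j : ZMod k) :
    ReflTransGen (prismArcs cyc spk) (g, b) (j, b) ∧
      ReflTransGen (prismArcs cyc spk) (j, b) (g + 1, b) := by
  have h' := reflTransGen_zmod_of_forall_ne (r := flip (prismArcs cyc spk)) (fun m => (m, b))
    (fun m hm => prismArcs_pred (h m hm)) j
  exact ⟨reflTransGen_swap.mp h'.2, reflTransGen_swap.mp h'.1⟩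

theorem reflTransGen_prismArcs_natCast_of_forall_false {a c : ℕ} {b : Bool} (hac : a ≤ c)
    (h : ∀ n, a ≤ n → n < c → cyc ((n : ZMod k), b) = some false) :
    ReflTransGen (prismArcs cyc spk) ((c : ZMod k), b) ((a : ZMod k), b) :=
  reflTransGen_swap.mp <| reflTransGen_of_forall_lt (r := flip (prismArcs cyc spk))
    (fun n => ((n : ZMod k), b)) hac fun n han hnc => by
      simpa [flip] using prismArcs_pred (spk := spk) (h n han hnc)

theorem isStrong_prismArcs_of_gap [NeZero k] (g : ZMod k) (d : Bool)
    (h₀ : ∀ m, m ≠ g → cyc (m, false) = some d) (h₁ : ∀ m, m ≠ g → cyc (m, true) = some !d)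
    (hg : spk g = some d) (hg' : spk (g + 1) = some !d) : IsStrong (prismArcs cyc spk) := by
  cases d
  · exact isStrong_of_layers (reflTransGen_prismArcs_of_forall_ne_false h₀)
      (reflTransGen_prismArcs_of_forall_ne_true h₁) (prismArcs_spoke hg') (prismArcs_spoke hg)
  · exact isStrong_of_layers (reflTransGen_prismArcs_of_forall_ne_true h₀)
      (reflTransGen_prismArcs_of_forall_ne_false h₁) (prismArcs_spoke hg) (prismArcs_spoke hg')

theorem isStrong_prismArcs_of_cycles [NeZero k] (h₀ : ∀ m, cyc (m, false) = some true)
    (h₁ : ∀ m, cyc (m, true) = some false) {p q : ZMod k} (hp : spk p = some true)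
    (hq : spk q = some false) : IsStrong (prismArcs cyc spk) := by
  have hbot j := fun g => reflTransGen_prismArcs_of_forall_ne_true (g := g) (spk := spk)
    (fun m _ => h₀ m) j
  have htop j := fun g => reflTransGen_prismArcs_of_forall_ne_false (g := g) (spk := spk)
    (fun m _ => h₁ m) j
  refine isStrong_of_layers (s₀ := q) (t₀ := p) (s₁ := p) (t₁ := q) (fun j => ⟨?_, (hbot j p).2⟩)
    (fun j => ⟨(htop j p).1, ?_⟩) (prismArcs_spoke hp) (prismArcs_spoke hq)
  · simpa using (hbot j (q - 1)).1
  · simpa using (htop j (q - 1)).2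

theorem isStrong_prismArcs_of_split_bottom [NeZero k] {j : ZMod k}
    (hbot : ∀ m, m ≠ j → m ≠ -1 → cyc (m, false) = some false)
    (hchord : cyc (-1, false) = some true) (htop : ∀ m, m ≠ -1 → cyc (m, true) = some true)
    (hup : spk 0 = some true) (hdown : spk (-1) = some false) (hj : spk j = some false)
    (hexit : spk (j + 1) = some true ∨ j + 1 = -1) : IsStrong (prismArcs cyc spk) := by
  have hk : 1 ≤ k := NeZero.one_le
  have from_hub x : ReflTransGen (prismArcs cyc spk) (0, true) (x, true) := by
    simpa using (reflTransGen_prismArcs_of_forall_ne_true htop x).1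
  have chord_up : ReflTransGen (prismArcs cyc spk) (-1, false) (0, true) :=
    .tail (.single (by simpa using prismArcs_succ (spk := spk) hchord)) (prismArcs_spoke hup)
  have to_hub x : ReflTransGen (prismArcs cyc spk) (x, true) (0, true) :=
    ((reflTransGen_prismArcs_of_forall_ne_true htop x).2.tail (prismArcs_spoke hdown)).trans
      chord_up
  have seg {a c : ℕ} (hac : a ≤ c) (hc : c < k) (hjac : ∀ n, a ≤ n → n < c → n ≠ j.val) :
      ReflTransGen (prismArcs cyc spk) ((c : ZMod k), false) ((a : ZMod k), false) :=
    reflTransGen_prismArcs_natCast_of_forall_false hac fun n han hnc =>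
      hbot _ (natCast_ne_of_ne_val (by omega) (hjac n han hnc))
        (natCast_ne_of_ne_val (by omega) (by rw [val_neg_one_of_one_le hk]; omega))
  have hjk := ZMod.val_lt j
  refine isStrong_of_hub (0, true) fun ⟨x, b⟩ => ?_
  cases b
  case true => exact ⟨to_hub x, from_hub x⟩
  have hxk := ZMod.val_lt x
  rw [← ZMod.natCast_zmod_val x]
  rcases le_or_gt x.val j.val with hxj | hjx
  · constructor
    · have to_zero := seg (Nat.zero_le _) hxk (by omega)
      rw [Nat.cast_zero] at to_zero
      exact to_zero.tail (prismArcs_spoke hup)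
    · have down_j := (from_hub j).tail (prismArcs_spoke hj)
      rw [← ZMod.natCast_zmod_val j] at down_j
      exact down_j.trans (seg hxj hjk fun n hn hnj => by omega)
  · constructor
    · have exit : ReflTransGen (prismArcs cyc spk) (((j.val + 1 : ℕ) : ZMod k), false)
          (0, true) := by
        rw [Nat.cast_succ, ZMod.natCast_zmod_val]
        rcases hexit with hexit | hexit
        · exact .head (prismArcs_spoke hexit) (to_hub _)
        · exact hexit ▸ chord_up
      exact (seg hjx hxk fun n hn hnx => by omega).trans exit
    · have down_last := (from_hub (-1)).tail (prismArcs_spoke hdown)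
      rw [← natCast_sub_one_self hk] at down_last
      exact down_last.trans (seg (by omega) (by omega) fun n hn hnk => by omega)

/-- Exchanging the layers and reversing every arc turns `cyc` into
`fun x => (cyc (x.1, !x.2)).map not` and leaves `spk` unchanged. -/
theorem isStrong_prismArcs_of_dual
    (h : IsStrong (prismArcs (fun x => (cyc (x.1, !x.2)).map not) spk)) :
    IsStrong (prismArcs cyc spk) := by
  refine h.of_antihom (fun x => (x.1, !x.2)) (fun x => ⟨(x.1, !x.2), by simp⟩) ?_
  rintro ⟨a, b⟩ ⟨c, d⟩ hac
  simp only [prismArcs, Option.map_eq_some_iff] at hac ⊢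
  cases b <;> cases d <;> aesop

theorem isStrong_prismArcs_of_split_top [NeZero k] {j : ZMod k}
    (hbot : ∀ m, m ≠ -1 → cyc (m, false) = some false)
    (htop : ∀ m, m ≠ j → m ≠ -1 → cyc (m, true) = some true)
    (hchord : cyc (-1, true) = some false)
    (hup : spk 0 = some true) (hdown : spk (-1) = some false) (hj : spk j = some false)
    (hexit : spk (j + 1) = some true ∨ j + 1 = -1) : IsStrong (prismArcs cyc spk) :=
  isStrong_prismArcs_of_dual <| isStrong_prismArcs_of_split_bottom
    (fun m hm hm' => by simp [htop m hm hm']) (by simp [hchord]) (fun m hm => by simp [hbot m hm])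
    hup hdown hj hexit

theorem adj_of_prismArcs (hk : 3 ≤ k) {x y : ZMod k × Bool} (h : prismArcs cyc spk x y) :
    (prism k).Adj x y := by
  obtain ⟨i, b⟩ := x
  obtain ⟨j, c⟩ := y
  simp only [prismArcs] at h
  rcases h with ⟨rfl, ⟨rfl, -⟩ | ⟨rfl, -⟩⟩ | ⟨rfl, hbc, -⟩
  · exact prism_adj_succ hk i b
  · exact (prism_adj_succ hk j b).symm
  · rw [prism, SimpleGraph.fromRel_adj]
    exact ⟨by simpa using hbc, Or.inl (Or.inr ⟨rfl, hbc⟩)⟩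

theorem prismArcs_asymm (hk : 3 ≤ k) {x y : ZMod k × Bool} (h : prismArcs cyc spk x y) :
    ¬ prismArcs cyc spk y x := by
  have h2 := two_ne_zero_of_three_le hk
  rcases h with ⟨hb, ⟨h1, c1⟩ | ⟨h1, c1⟩⟩ | ⟨h1, hb, s1⟩ <;>
    rintro (⟨hb', ⟨h2', c2⟩ | ⟨h2', c2⟩⟩ | ⟨h2', hb', s2⟩)
  all_goals first
    | exact h2 (by linear_combination -(h1 + h2'))
    | exact hb hb'.symm
    | exact hb' hb.symm
    | simp_all

theorem prismArcs_or_of_adj (c : ZMod k × Bool → Bool) (s : ZMod k → Bool)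
    {x y : ZMod k × Bool} (h : (prism k).Adj x y) :
    prismArcs (fun z => some (c z)) (fun i => some (s i)) x y ∨
      prismArcs (fun z => some (c z)) (fun i => some (s i)) y x := by
  have key : ∀ x y : ZMod k × Bool, (x.2 = y.2 ∧ y.1 = x.1 + 1) ∨ (x.1 = y.1 ∧ x.2 ≠ y.2) →
      prismArcs (fun z => some (c z)) (fun i => some (s i)) x y ∨
        prismArcs (fun z => some (c z)) (fun i => some (s i)) y x := by
    rintro ⟨i, b⟩ ⟨j, d⟩ (⟨rfl, rfl⟩ | ⟨rfl, hbd⟩)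
    · cases hc : c (i, b)
      · exact Or.inr (Or.inl ⟨rfl, Or.inr ⟨rfl, by simp [hc]⟩⟩)
      · exact Or.inl (Or.inl ⟨rfl, Or.inl ⟨rfl, by simp [hc]⟩⟩)
    · cases b <;> cases d <;> simp at hbd <;> cases hs : s i <;> simp [prismArcs, hs]
  rw [prism, SimpleGraph.fromRel_adj] at h
  exact h.2.elim (key x y) fun h => (key y x h).symm

def prismOrient (hk : 3 ≤ k) (c : ZMod k × Bool → Bool) (s : ZMod k → Bool) :
    Orient (prism k) where
  dir := prismArcs (fun z => some (c z)) (fun i => some (s i))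
  dir_iff _ _ := ⟨fun h => h.elim (adj_of_prismArcs hk) fun h => (adj_of_prismArcs hk h).symm,
    prismArcs_or_of_adj c s⟩
  not_both _ _ := prismArcs_asymm hk

theorem prismArcs_mono {cyc' : ZMod k × Bool → Option Bool} {spk' : ZMod k → Option Bool}
    (hc : ∀ z d, cyc' z = some d → cyc z = some d) (hs : ∀ i d, spk' i = some d → spk i = some d)
    {x y : ZMod k × Bool} (h : prismArcs cyc' spk' x y) : prismArcs cyc spk x y := by
  rcases h with ⟨hb, ⟨h1, h2⟩ | ⟨h1, h2⟩⟩ | ⟨h1, h2, h3⟩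
  exacts [Or.inl ⟨hb, Or.inl ⟨h1, hc _ _ h2⟩⟩, Or.inl ⟨hb, Or.inr ⟨h1, hc _ _ h2⟩⟩,
    Or.inr ⟨h1, h2, hs _ _ h3⟩]

theorem eq_some_of_update_none {α β : Type*} [DecidableEq α] {f : α → Option β} {a z : α}
    {v : β} (h : Function.update f a none z = some v) : f z = some v := by
  by_cases hz : z = a <;> simp_all

theorem delEdge_prismArcs_of_update_cyc (hk : 3 ≤ k) {i : ZMod k} {b : Bool}
    {x y : ZMod k × Bool} (h : prismArcs (Function.update cyc (i, b) none) spk x y) :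
    delEdge (prismArcs cyc spk) (i, b) (i + 1, b) x y := by
  refine ⟨prismArcs_mono (fun _ _ => eq_some_of_update_none) (fun _ _ => id) h, ?_⟩
  rintro (⟨rfl, rfl⟩ | ⟨rfl, rfl⟩) <;> rcases h with ⟨-, ⟨h1, hc⟩ | ⟨h1, hc⟩⟩ | ⟨-, hb, -⟩
  all_goals first
    | exact hb rfl
    | exact two_ne_zero_of_three_le hk (by linear_combination -h1)
    | simp at hc

theorem delEdge_prismArcs_of_update_spk {i : ZMod k} {x y : ZMod k × Bool}
    (h : prismArcs cyc (Function.update spk i none) x y) :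
    delEdge (prismArcs cyc spk) (i, false) (i, true) x y := by
  refine ⟨prismArcs_mono (fun _ _ => id) (fun _ _ => eq_some_of_update_none) h, ?_⟩
  rintro (⟨rfl, rfl⟩ | ⟨rfl, rfl⟩) <;> rcases h with ⟨hb, -⟩ | ⟨-, -, hs⟩
  all_goals first
    | exact Bool.false_ne_true hb
    | exact Bool.false_ne_true hb.symm
    | simp at hs

theorem edgeDeletable_prismOrient_cycle (hk : 3 ≤ k) {c : ZMod k × Bool → Bool}
    {s : ZMod k → Bool} {i : ZMod k} {b : Bool}
    (h : IsStrong (prismArcs (Function.update (fun z => some (c z)) (i, b) none)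
      (fun i => some (s i)))) :
    EdgeDeletable (prismOrient hk c s) (i, b) (i + 1, b) :=
  h.mono fun _ _ => delEdge_prismArcs_of_update_cyc hk

theorem edgeDeletable_prismOrient_spoke (hk : 3 ≤ k) {c : ZMod k × Bool → Bool}
    {s : ZMod k → Bool} {i : ZMod k}
    (h : IsStrong (prismArcs (fun z => some (c z))
      (Function.update (fun i => some (s i)) i none))) :
    EdgeDeletable (prismOrient hk c s) (i, false) (i, true) :=
  h.mono fun _ _ => delEdge_prismArcs_of_update_spk

end Prism

section Orientations
variable {k : ℕ}

def orient₁ (hk : 3 ≤ k) : Orient (prism k) :=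
  prismOrient hk (fun x => !x.2) fun i => decide (Even i.val)

def orient₂ (hk : 3 ≤ k) : Orient (prism k) :=
  prismOrient hk (fun x => if x.1 = -1 then !x.2 else x.2) fun i => decide (Even i.val ∧ i ≠ -1)

theorem isStrong_orient₁ (hk : 3 ≤ k) : IsStrong (orient₁ hk).dir := by
  have : NeZero k := ⟨by omega⟩
  dsimp only [orient₁, prismOrient]
  refine isStrong_prismArcs_of_gap 0 true ?_ ?_ ?_ ?_
  all_goals simp [ZMod.val_one'' (show k ≠ 1 by omega)]

theorem edgeDeletable_orient₁_cycle (hk : 3 ≤ k) {i : ZMod k} (hi : Even i.val) (hi' : i ≠ -1)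
    (b : Bool) : EdgeDeletable (orient₁ hk) (i, b) (i + 1, b) := by
  have : NeZero k := ⟨by omega⟩
  refine edgeDeletable_prismOrient_cycle hk (isStrong_prismArcs_of_gap i true ?_ ?_ ?_ ?_)
  · intro m hm; simp [hm]
  · intro m hm; simp [hm]
  · simp [hi]
  · simp [val_add_one_of_ne_neg_one hi', Nat.even_add_one, hi]

theorem edgeDeletable_orient₁_spoke (hk : 3 ≤ k) {j : ZMod k} (hj : j = 0 ∨ j = -1) :
    EdgeDeletable (orient₁ hk) (j, false) (j, true) := by
  have : NeZero k := ⟨by omega⟩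
  have h1 := one_ne_zero_of_three_le hk
  have hv1 : (1 : ZMod k).val = 1 := ZMod.val_one'' (by omega)
  refine edgeDeletable_prismOrient_spoke hk ?_
  rcases hj with rfl | rfl
  · have hv2 : (2 : ZMod k).val = 2 := by
      simpa using ZMod.val_natCast_of_lt (n := k) (a := 2) (by omega)
    refine isStrong_prismArcs_of_cycles (p := 2) (q := 1) ?_ ?_ ?_ ?_
    all_goals simp [two_ne_zero_of_three_le hk, hv2, h1, hv1]
  · have h1' : (1 : ZMod k) ≠ -1 := fun h => two_ne_zero_of_three_le hk (by linear_combination h)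
    refine isStrong_prismArcs_of_cycles (p := 0) (q := 1) ?_ ?_ ?_ ?_
    all_goals simp [h1', hv1, h1]

theorem isStrong_orient₂ (hk : 3 ≤ k) : IsStrong (orient₂ hk).dir := by
  have : NeZero k := ⟨by omega⟩
  dsimp only [orient₂, prismOrient]
  refine isStrong_prismArcs_of_gap (-1) false ?_ ?_ ?_ ?_
  all_goals simp +contextual [zero_ne_neg_one_of_three_le hk]

theorem edgeDeletable_orient₂_spoke (hk : 3 ≤ k) {j : ZMod k} (hj : j ≠ 0) (hj' : j ≠ -1) :
    EdgeDeletable (orient₂ hk) (j, false) (j, true) := by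
  have : NeZero k := ⟨by omega⟩
  refine edgeDeletable_prismOrient_spoke hk (isStrong_prismArcs_of_gap (-1) false ?_ ?_ ?_ ?_)
  all_goals simp +contextual [zero_ne_neg_one_of_three_le hk, hj.symm, hj'.symm]

theorem edgeDeletable_orient₂_cycle (hk : 3 ≤ k) {i : ZMod k} (hi : ¬ Even i.val ∨ i = -1)
    (b : Bool) : EdgeDeletable (orient₂ hk) (i, b) (i + 1, b) := by
  have : NeZero k := ⟨by omega⟩
  have h0 := zero_ne_neg_one_of_three_le hk
  refine edgeDeletable_prismOrient_cycle hk ?_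
  by_cases hi' : i = -1
  · subst hi'
    refine isStrong_prismArcs_of_gap (-1) false ?_ ?_ ?_ ?_
    all_goals simp +contextual [h0]
  have hodd : ¬ Even i.val := hi.resolve_right hi'
  have hexit : decide (Even (i + 1).val ∧ i + 1 ≠ -1) = true ∨ i + 1 = -1 := by
    by_cases h : i + 1 = -1
    · exact Or.inr h
    · simp [h, val_add_one_of_ne_neg_one hi', Nat.even_add_one, hodd]
  cases b
  · refine isStrong_prismArcs_of_split_bottom (j := i) ?_ ?_ ?_ ?_ ?_ ?_ (by simpa using hexit)
    all_goals simp +contextual [h0, hi', Ne.symm hi', hodd]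
  · refine isStrong_prismArcs_of_split_top (j := i) ?_ ?_ ?_ ?_ ?_ ?_ (by simpa using hexit)
    all_goals simp +contextual [h0, hi', Ne.symm hi', hodd]

theorem isFrankCover_prism (hk : 3 ≤ k) : IsFrankCover (prism k) ![orient₁ hk, orient₂ hk] := by
  have cycle (i : ZMod k) (b : Bool) :
      ∃ n, EdgeDeletable (![orient₁ hk, orient₂ hk] n) (i, b) (i + 1, b) := by
    by_cases hi : Even i.val ∧ i ≠ -1
    · exact ⟨0, edgeDeletable_orient₁_cycle hk hi.1 hi.2 b⟩
    · exact ⟨1, edgeDeletable_orient₂_cycle hk (by tauto) b⟩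
  have spoke (j : ZMod k) :
      ∃ n, EdgeDeletable (![orient₁ hk, orient₂ hk] n) (j, false) (j, true) := by
    by_cases hj : j = 0 ∨ j = -1
    · exact ⟨0, edgeDeletable_orient₁_spoke hk hj⟩
    · rw [not_or] at hj
      exact ⟨1, edgeDeletable_orient₂_spoke hk hj.1 hj.2⟩
  refine ⟨Fin.forall_fin_two.mpr ⟨isStrong_orient₁ hk, isStrong_orient₂ hk⟩, ?_⟩
  rintro ⟨i, b⟩ w huv
  rcases eq_or_eq_or_eq_of_prism_adj huv with rfl | rfl | rfl
  · exact cycle i b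
  · obtain ⟨n, hn⟩ := cycle (i - 1) b
    exact ⟨n, edgeDeletable_comm.mp (by simpa using hn)⟩
  · cases b
    · exact spoke i
    · obtain ⟨n, hn⟩ := spoke i
      exact ⟨n, edgeDeletable_comm.mp hn⟩

end Orientations

theorem stmt_8 (k : ℕ) (hk : 3 ≤ k) : frankNumber (prism k) = 2 := by
  exact frankNumber_eq_two (isFrankCover_prism hk) fun O hO =>
    not_forall_edgeDeletable_of_three_neighbors O (v := (0, false)) (a := (0 + 1, false))
      (b := (0 - 1, false)) (c := (0, true)) (fun w => eq_or_eq_or_eq_of_prism_adj)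
      (prism_adj_succ hk 0 false) fun w hw => hO _ w hw

end Frank
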